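/- arXiv:1702.07061 — 4 statements merged into one kernel-verified Lean document; each statement's English description precedes it below -/
import Mathlib

section
/- Let M ∈ ℝ^{d×d} be symmetric, F : ℝ^d → ℝ be C², h > 0, v > 0. Define the one-step map (p,q) ↦ (P₁,Q₁) implicitly by P₁ = e^{-vh} p - (h²/2) ∇²F(q) M P₁ - h(1+vh/2) e^{-vh} c₁(q,w) and Q₁ = q + h(1-vh/2) e^{vh} M P₁ + (h²/2) M ∇F(q) + (h/2) M σ w, where c₁(q,w) = ∇F(q) + σ w/(h(1+vh/2))·(h(1+vh/2)) (i.e. the scheme (3.8.11) with fixed noise increment w). Then the differential 2-form satisfies dP₁ ∧ dQ₁ = e^{-vh} dp ∧ dq, i.e. the Jacobian J of the map (p,q) ↦ (P₁,Q₁) satisfies Jᵀ 𝕁 J = e^{-vh} 𝕁, where 𝕁 = [[0, I_d],[-I_d, 0]]. -/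
open Real

open Real Asymptotics Matrix

section Aux

theorem hasFDerivAt_clm_apply_of_continuousAt
    {E F G : Type*} [NormedAddCommGroup E] [NormedSpace ℝ E]
    [NormedAddCommGroup F] [NormedSpace ℝ F]
    [NormedAddCommGroup G] [NormedSpace ℝ G]
    {A : E → F →L[ℝ] G} {f : E → F} {f' : E →L[ℝ] F} {x₀ : E}
    (hA : ContinuousAt A x₀) (hf : HasFDerivAt f f' x₀) (h0 : f x₀ = 0) :
    HasFDerivAt (fun x => A x (f x)) ((A x₀).comp f') x₀ := by
  rw [hasFDerivAt_iff_isLittleO] at hf ⊢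
  have e1 : (fun x => A x (f x - f x₀ - f' (x - x₀))) =o[nhds x₀] fun x => x - x₀ := by
    have hb : (fun x => ‖A x‖) =O[nhds x₀] (fun _ => (1:ℝ)) := hA.norm.isBigO_one ℝ
    have := hb.mul_isLittleO hf.norm_left.norm_right
    have hle : ∀ x, ‖A x (f x - f x₀ - f' (x - x₀))‖ ≤ ‖(‖A x‖ * ‖f x - f x₀ - f' (x - x₀)‖)‖ := by
      intro x
      rw [Real.norm_of_nonneg (by positivity)]
      exact (A x).le_opNorm _
    exact ((isBigO_of_le _ hle).trans_isLittleO this).trans_isBigO (by simpa using (isBigO_refl _ _).norm_left)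
  have e2 : (fun x => (A x - A x₀) (f' (x - x₀))) =o[nhds x₀] fun x => x - x₀ := by
    have ht : (fun x => ‖A x - A x₀‖) =o[nhds x₀] (fun _ => (1:ℝ)) := by
      rw [isLittleO_one_iff]
      have : Filter.Tendsto (fun x => A x - A x₀) (nhds x₀) (nhds (A x₀ - A x₀)) :=
        (hA.sub continuousAt_const).tendsto
      simpa using this.norm
    have hO : (fun x => ‖f' (x - x₀)‖) =O[nhds x₀] fun x => x - x₀ :=
      (f'.isBigO_sub (nhds x₀) x₀).norm_left
    have := ht.mul_isBigO hO.norm_right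
    have hle : ∀ x, ‖(A x - A x₀) (f' (x - x₀))‖ ≤ ‖(‖A x - A x₀‖ * ‖f' (x - x₀)‖)‖ := by
      intro x
      rw [Real.norm_of_nonneg (by positivity)]
      exact (A x - A x₀).le_opNorm (f' (x - x₀))
    exact ((isBigO_of_le _ hle).trans_isLittleO this).trans_isBigO (by simpa using (isBigO_refl _ _))
  have := e1.add e2
  apply this.congr' _ (by rfl)
  filter_upwards with x
  simp only [h0, map_sub, map_zero, sub_zero, ContinuousLinearMap.coe_comp',
    Function.comp_apply, ContinuousLinearMap.sub_apply]
  abel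

variable {d : ℕ}

/-- `mulVec` as a linear map into continuous linear maps. -/
noncomputable def mcLM : Matrix (Fin d) (Fin d) ℝ →ₗ[ℝ] ((Fin d → ℝ) →L[ℝ] (Fin d → ℝ)) where
  toFun N := LinearMap.toContinuousLinearMap N.mulVecLin
  map_add' N₁ N₂ := by ext x; simp [Matrix.add_mulVec]
  map_smul' c N := by ext x; simp [Matrix.smul_mulVec]

@[simp] lemma mcLM_apply (N : Matrix (Fin d) (Fin d) ℝ) (x : Fin d → ℝ) :
    mcLM N x = N.mulVec x := rfl

lemma continuous_mcLM : Continuous (mcLM (d := d)) :=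
  mcLM.continuous_of_finiteDimensional

/-- dot product with a fixed vector on the right, as a CLM. -/
noncomputable def dotL (y : Fin d → ℝ) : (Fin d → ℝ) →L[ℝ] ℝ :=
  LinearMap.toContinuousLinearMap
    { toFun := fun x => dotProduct x y
      map_add' := fun a b => add_dotProduct a b y
      map_smul' := fun c a => smul_dotProduct c a y }

@[simp] lemma dotL_apply (y x : Fin d → ℝ) : dotL y x = dotProduct x y := rfl

/-- `y ↦ (u ↦ u.2 ⬝ᵥ y)` as a CLM. -/
noncomputable def xiC : (Fin d → ℝ) →L[ℝ] (((Fin d → ℝ) × (Fin d → ℝ)) →L[ℝ] ℝ) :=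
  LinearMap.toContinuousLinearMap
    { toFun := fun y => (dotL y).comp (ContinuousLinearMap.snd ℝ _ _)
      map_add' := fun a b => by ext u <;> exact dotProduct_add _ a b
      map_smul' := fun c a => by ext u <;> exact dotProduct_smul c _ a }

@[simp] lemma xiC_apply (y : Fin d → ℝ) (u : (Fin d → ℝ) × (Fin d → ℝ)) :
    xiC y u = dotProduct u.2 y := rfl

lemma symm_dot₁ (N : Matrix (Fin d) (Fin d) ℝ) (hN : Nᵀ = N) (x y : Fin d → ℝ) :
    x ⬝ᵥ (N *ᵥ y) = (N *ᵥ x) ⬝ᵥ y := by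
  rw [Matrix.dotProduct_mulVec, ← Matrix.mulVec_transpose, hN]

lemma symm_dot₂ (M N : Matrix (Fin d) (Fin d) ℝ) (hM : Mᵀ = M) (hN : Nᵀ = N)
    (x y : Fin d → ℝ) : x ⬝ᵥ (M *ᵥ (N *ᵥ y)) = ((N * M) *ᵥ x) ⬝ᵥ y := by
  rw [Matrix.mulVec_mulVec, Matrix.dotProduct_mulVec, ← Matrix.mulVec_transpose,
    Matrix.transpose_mul, hM, hN]

end Aux


/-- Conformal symplecticity of scheme (3.8.11): the one-step map
`(p,q) ↦ (P₁,Q₁)` (with fixed noise increment `w`) scales the canonical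
symplectic form by `e^{-vh}`: for every point `z` and all tangent vectors
`u, u'`, `ω(DΦ(z)u, DΦ(z)u') = e^{-vh} ω(u,u')`, where
`ω((p₁,q₁),(p₂,q₂)) = Σᵢ p₁ⁱ q₂ⁱ - Σᵢ q₁ⁱ p₂ⁱ`. -/
theorem scheme_conformal_symplectic
    {d m : ℕ} (F : (Fin d → ℝ) → ℝ) (hF : ContDiff ℝ 2 F)
    (M : Matrix (Fin d) (Fin d) ℝ) (hM : M.IsSymm)
    (σ : Matrix (Fin d) (Fin m) ℝ) (w : Fin m → ℝ)
    (v h : ℝ) (hv : 0 < v) (hh : 0 < h)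
    (gradF : (Fin d → ℝ) → (Fin d → ℝ))
    (hgrad : ∀ q i, gradF q i = fderiv ℝ F q (Pi.single i 1))
    (hess : (Fin d → ℝ) → Matrix (Fin d) (Fin d) ℝ)
    (hhess : ∀ q i j, hess q i j
      = fderiv ℝ (fun x => fderiv ℝ F x (Pi.single j 1)) q (Pi.single i 1))
    (hinv : ∀ q, IsUnit ((1 : Matrix (Fin d) (Fin d) ℝ) + (h ^ 2 / 2) • (hess q * M)))
    (P₁ Q₁ : (Fin d → ℝ) × (Fin d → ℝ) → (Fin d → ℝ))
    (hP : ∀ z, P₁ z = Real.exp (-(v * h)) • z.1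
      - (h ^ 2 / 2) • (hess z.2).mulVec (M.mulVec (P₁ z))
      - (h * (1 + v * h / 2) * Real.exp (-(v * h))) • gradF z.2
      - ((1 + v * h / 2) * Real.exp (-(v * h))) • σ.mulVec w)
    (hQ : ∀ z, Q₁ z = z.2
      + (h * (1 - v * h / 2) * Real.exp (v * h)) • M.mulVec (P₁ z)
      + (h ^ 2 / 2) • M.mulVec (gradF z.2)
      + (h / 2) • M.mulVec (σ.mulVec w))
    (hdiff : Differentiable ℝ (fun z => (P₁ z, Q₁ z)))
    (ω : ((Fin d → ℝ) × (Fin d → ℝ)) → ((Fin d → ℝ) × (Fin d → ℝ)) → ℝ)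
    (hω : ∀ u u', ω u u' = (∑ i, u.1 i * u'.2 i) - ∑ i, u.2 i * u'.1 i) :
    ∀ (z u u' : (Fin d → ℝ) × (Fin d → ℝ)),
      ω (fderiv ℝ (fun z' => (P₁ z', Q₁ z')) z u)
        (fderiv ℝ (fun z' => (P₁ z', Q₁ z')) z u')
        = Real.exp (-(v * h)) * ω u u' := by
  intro z₀ u u'
  -- abbreviations
  set A := Real.exp (-(v * h)) with hA
  set c₁ := h * (1 + v * h / 2) * Real.exp (-(v * h)) with hc₁
  set b := h * (1 - v * h / 2) * Real.exp (v * h) with hb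
  set r : Fin d → ℝ := ((1 + v * h / 2) * Real.exp (-(v * h))) • σ.mulVec w with hr
  -- smoothness facts about F
  have hF1 : ContDiff ℝ 1 (fderiv ℝ F) := by
    have h2 : ContDiff ℝ ((1 : ℕ) + 1) F := by exact_mod_cast hF
    exact ((contDiff_succ_iff_fderiv).mp h2).2.2
  have hdF : Differentiable ℝ F := hF.differentiable two_ne_zero
  have hdF' : Differentiable ℝ (fderiv ℝ F) := hF1.differentiable one_ne_zero
  have hcF'' : Continuous (fun q => fderiv ℝ (fderiv ℝ F) q) :=
    (contDiff_one_iff_fderiv.mp hF1).2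
  -- pointwise applied second derivative
  have happ : ∀ (q y : Fin d → ℝ),
      HasFDerivAt (fun x => fderiv ℝ F x y) ((fderiv ℝ (fderiv ℝ F) q).flip y) q := by
    intro q y
    have h1 := (hdF' q).hasFDerivAt.clm_apply (hasFDerivAt_const y q)
    apply h1.congr_fderiv
    ext x
    simp
  have hessEq : ∀ q i j, hess q i j
      = fderiv ℝ (fderiv ℝ F) q (Pi.single i 1) (Pi.single j 1) := by
    intro q i j
    rw [hhess q i j, (happ q (Pi.single j 1)).fderiv]
    rfl
  have hsymm'' : ∀ (q x y : Fin d → ℝ),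
      fderiv ℝ (fderiv ℝ F) q x y = fderiv ℝ (fderiv ℝ F) q y x := fun q =>
    second_derivative_symmetric (fun y => (hdF y).hasFDerivAt) ((hdF' q).hasFDerivAt)
  have hessSymm : ∀ q, (hess q)ᵀ = hess q := by
    intro q
    ext i j
    rw [Matrix.transpose_apply, hessEq, hessEq, hsymm'']
  have hessCont : Continuous hess := by
    apply continuous_matrix
    intro i j
    have : (fun q => hess q i j)
        = fun q => fderiv ℝ (fderiv ℝ F) q (Pi.single i 1) (Pi.single j 1) :=
      funext fun q => hessEq q i j
    rw [this]
    exact (hcF''.clm_apply continuous_const).clm_apply continuous_const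
  -- derivative of gradF
  set L : (Fin d → ℝ) → ((Fin d → ℝ) →L[ℝ] (Fin d → ℝ)) := fun q =>
    ContinuousLinearMap.pi (fun i => (fderiv ℝ (fderiv ℝ F) q).flip (Pi.single i 1)) with hL
  have hgradD : ∀ q, HasFDerivAt gradF (L q) q := by
    intro q
    apply hasFDerivAt_pi''
    intro i
    rw [show (fun x => gradF x i) = fun x => fderiv ℝ F x (Pi.single i 1) from
      funext fun x => hgrad x i, hL, ContinuousLinearMap.proj_pi]
    exact happ q (Pi.single i 1)
  have hLval : ∀ q x, L q x = Matrix.vecMul x (hess q) := by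
    intro q x
    funext i
    have hxsum : x = ∑ j, (x j) • (Pi.single j 1 : Fin d → ℝ) := by
      funext k
      simp [Finset.sum_apply, Pi.single_apply]
    have : L q x i = fderiv ℝ (fderiv ℝ F) q x (Pi.single i 1) := rfl
    rw [this]
    conv_lhs => rw [hxsum]
    rw [map_sum]
    simp only [ContinuousLinearMap.coe_sum', Finset.sum_apply]
    rw [Matrix.vecMul, dotProduct]
    refine Finset.sum_congr rfl fun j _ => ?_
    rw [hessEq, (fderiv ℝ (fderiv ℝ F) q).map_smul, ContinuousLinearMap.smul_apply, smul_eq_mul]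
  have hLval' : ∀ q x, L q x = (hess q).mulVec x := by
    intro q x
    rw [hLval, ← Matrix.mulVec_transpose, hessSymm]
  -- differentiability of the components
  have hdP : Differentiable ℝ P₁ := hdiff.fst
  have hdQ : Differentiable ℝ Q₁ := hdiff.snd
  set DP := fderiv ℝ P₁ z₀ with hDPdef
  set DQ := fderiv ℝ Q₁ z₀ with hDQdef
  have hpair : fderiv ℝ (fun z' => (P₁ z', Q₁ z')) z₀ = DP.prod DQ :=
    (((hdP z₀).hasFDerivAt).prodMk ((hdQ z₀).hasFDerivAt)).fderiv
  set H₀ := hess z₀.2 with hH₀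
  set c : Fin d → ℝ := P₁ z₀ with hc
  set K : ((Fin d → ℝ) × (Fin d → ℝ)) → Fin d → ℝ :=
    fun z => (hess z.2 * M).mulVec c with hKdef
  set Θ : ((Fin d → ℝ) × (Fin d → ℝ)) → Fin d → ℝ :=
    fun z => mcLM (hess z.2 * M) (P₁ z - c) with hΘdef
  have hsplit : ∀ z : (Fin d → ℝ) × (Fin d → ℝ),
      (hess z.2).mulVec (M.mulVec (P₁ z)) = K z + Θ z := by
    intro z
    show _ = (hess z.2 * M) *ᵥ c + mcLM (hess z.2 * M) (P₁ z - c)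
    rw [mcLM_apply, ← Matrix.mulVec_add,
      show c + (P₁ z - c) = P₁ z by module, Matrix.mulVec_mulVec]
  have hP' : ∀ z, P₁ z = A • z.1 - (h^2/2) • (K z + Θ z) - c₁ • gradF z.2 - r := by
    intro z
    rw [hP z, hsplit z]
  have ΘD : HasFDerivAt Θ ((mcLM (H₀ * M)).comp DP) z₀ := by
    have hcont : ContinuousAt
        (fun z : (Fin d → ℝ) × (Fin d → ℝ) => mcLM (hess z.2 * M)) z₀ :=
      (continuous_mcLM.comp
        ((hessCont.comp continuous_snd).matrix_mul continuous_const)).continuousAt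
    have hfd : HasFDerivAt (fun z => P₁ z - c) DP z₀ := ((hdP z₀).hasFDerivAt).sub_const c
    exact hasFDerivAt_clm_apply_of_continuousAt hcont hfd (sub_self _)
  have hKd : DifferentiableAt ℝ K z₀ := by
    have hh2 : (2/h^2) * (h^2/2) = 1 := by field_simp
    have hKeq : K = fun z => (2/h^2) • (A • z.1 - c₁ • gradF z.2 - r - P₁ z) - Θ z := by
      funext z
      have h1 : (h^2/2) • (K z + Θ z) = A • z.1 - c₁ • gradF z.2 - r - P₁ z := by
        rw [hP' z]; abel
      have h2 : K z + Θ z = (2/h^2) • (A • z.1 - c₁ • gradF z.2 - r - P₁ z) := by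
        rw [← h1, smul_smul, hh2, one_smul]
      exact eq_sub_of_add_eq h2
    rw [hKeq]
    have d1 : DifferentiableAt ℝ (fun z : (Fin d → ℝ) × (Fin d → ℝ) => A • z.1) z₀ :=
      differentiableAt_fst.const_smul A
    have d2 : DifferentiableAt ℝ (fun z : (Fin d → ℝ) × (Fin d → ℝ) => gradF z.2) z₀ :=
      ((hgradD z₀.2).differentiableAt).comp z₀ differentiableAt_snd
    exact ((((d1.sub (d2.const_smul c₁)).sub_const r).sub (hdP z₀)).const_smul
      (2/h^2)).sub ΘD.differentiableAt
  set DK := fderiv ℝ K z₀ with hDKdef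
  -- derivative of P₁ via the implicit relation
  have hRHS : HasFDerivAt P₁
      ((A • ContinuousLinearMap.fst ℝ (Fin d → ℝ) (Fin d → ℝ)
          - (h^2/2) • (DK + (mcLM (H₀ * M)).comp DP))
        - c₁ • ((L z₀.2).comp (ContinuousLinearMap.snd ℝ (Fin d → ℝ) (Fin d → ℝ)))) z₀ := by
    have h1 : HasFDerivAt (fun z : (Fin d → ℝ) × (Fin d → ℝ) => A • z.1)
        (A • ContinuousLinearMap.fst ℝ (Fin d → ℝ) (Fin d → ℝ)) z₀ :=
      hasFDerivAt_fst.const_smul A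
    have h2 : HasFDerivAt (fun z : (Fin d → ℝ) × (Fin d → ℝ) => (h^2/2) • (K z + Θ z))
        ((h^2/2) • (DK + (mcLM (H₀ * M)).comp DP)) z₀ :=
      ((hKd.hasFDerivAt).add ΘD).const_smul (h^2/2)
    have h3 : HasFDerivAt (fun z : (Fin d → ℝ) × (Fin d → ℝ) => gradF z.2)
        ((L z₀.2).comp (ContinuousLinearMap.snd ℝ (Fin d → ℝ) (Fin d → ℝ))) z₀ :=
      (hgradD z₀.2).comp z₀ hasFDerivAt_snd
    have hall := ((h1.sub h2).sub (h3.const_smul c₁)).sub_const r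
    exact hall.congr_of_eventuallyEq (Filter.Eventually.of_forall fun z => hP' z)
  have hDPeq := hRHS.fderiv
  rw [← hDPdef] at hDPeq
  have hX : ∀ (y : (Fin d → ℝ) × (Fin d → ℝ)),
      DP y + (h^2/2) • ((H₀ * M) *ᵥ (DP y))
        = A • y.1 - (h^2/2) • DK y - c₁ • (H₀ *ᵥ y.2) := by
    intro y
    have happly := congrArg (fun T : ((Fin d → ℝ) × (Fin d → ℝ)) →L[ℝ] (Fin d → ℝ) => T y) hDPeq
    simp only [ContinuousLinearMap.coe_sub', Pi.sub_apply, ContinuousLinearMap.coe_smul',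
      Pi.smul_apply, ContinuousLinearMap.add_apply, ContinuousLinearMap.coe_comp',
      Function.comp_apply, ContinuousLinearMap.coe_fst', ContinuousLinearMap.coe_snd',
      mcLM_apply] at happly
    rw [hLval'] at happly
    linear_combination (norm := module) happly
  -- derivative of Q₁
  have hQRHS : HasFDerivAt Q₁
      ((ContinuousLinearMap.snd ℝ (Fin d → ℝ) (Fin d → ℝ) + b • (mcLM M).comp DP)
        + (h^2/2) • (mcLM M).comp
            ((L z₀.2).comp (ContinuousLinearMap.snd ℝ (Fin d → ℝ) (Fin d → ℝ)))) z₀ := by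
    have h1 : HasFDerivAt (fun z : (Fin d → ℝ) × (Fin d → ℝ) => z.2)
        (ContinuousLinearMap.snd ℝ (Fin d → ℝ) (Fin d → ℝ)) z₀ := hasFDerivAt_snd
    have h2 : HasFDerivAt (fun z : (Fin d → ℝ) × (Fin d → ℝ) => M *ᵥ P₁ z)
        ((mcLM M).comp DP) z₀ := (mcLM M).hasFDerivAt.comp z₀ (hdP z₀).hasFDerivAt
    have h3 : HasFDerivAt (fun z : (Fin d → ℝ) × (Fin d → ℝ) => gradF z.2)
        ((L z₀.2).comp (ContinuousLinearMap.snd ℝ (Fin d → ℝ) (Fin d → ℝ))) z₀ :=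
      (hgradD z₀.2).comp z₀ hasFDerivAt_snd
    have h4 : HasFDerivAt (fun z : (Fin d → ℝ) × (Fin d → ℝ) => M *ᵥ gradF z.2)
        ((mcLM M).comp ((L z₀.2).comp
          (ContinuousLinearMap.snd ℝ (Fin d → ℝ) (Fin d → ℝ)))) z₀ :=
      (mcLM M).hasFDerivAt.comp z₀ h3
    have hall := ((h1.add (h2.const_smul b)).add (h4.const_smul (h^2/2))).add_const
      ((h/2) • M *ᵥ (σ *ᵥ w))
    exact hall.congr_of_eventuallyEq (Filter.Eventually.of_forall fun z => hQ z)
  have hDQeq := hQRHS.fderiv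
  rw [← hDQdef] at hDQeq
  have hY : ∀ (y : (Fin d → ℝ) × (Fin d → ℝ)),
      DQ y = y.2 + b • (M *ᵥ DP y) + (h^2/2) • (M *ᵥ (H₀ *ᵥ y.2)) := by
    intro y
    have happly := congrArg (fun T : ((Fin d → ℝ) × (Fin d → ℝ)) →L[ℝ] (Fin d → ℝ) => T y) hDQeq
    simp only [ContinuousLinearMap.add_apply, ContinuousLinearMap.coe_smul',
      Pi.smul_apply, ContinuousLinearMap.coe_comp', Function.comp_apply,
      ContinuousLinearMap.coe_snd', mcLM_apply] at happly
    rw [hLval'] at happly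
    exact happly
  -- symmetry of the "third derivative" term
  have hgt : ∀ z : (Fin d → ℝ) × (Fin d → ℝ),
      HasFDerivAt (fun z : (Fin d → ℝ) × (Fin d → ℝ) =>
        dotProduct (gradF z.2) (M *ᵥ c)) (xiC (K z)) z := by
    intro z
    have h3 : HasFDerivAt (fun z : (Fin d → ℝ) × (Fin d → ℝ) => gradF z.2)
        ((L z.2).comp (ContinuousLinearMap.snd ℝ (Fin d → ℝ) (Fin d → ℝ))) z :=
      (hgradD z.2).comp z hasFDerivAt_snd
    apply ((dotL (M *ᵥ c)).hasFDerivAt.comp z h3).congr_fderiv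
    refine ContinuousLinearMap.ext fun y => ?_
    simp only [ContinuousLinearMap.coe_comp', Function.comp_apply, dotL_apply,
      xiC_apply, ContinuousLinearMap.coe_snd']
    rw [hLval, ← Matrix.dotProduct_mulVec, Matrix.mulVec_mulVec]
  have hgt' : HasFDerivAt (fun z => xiC (K z)) (xiC.comp DK) z₀ :=
    xiC.hasFDerivAt.comp z₀ hKd.hasFDerivAt
  have hsymKey := second_derivative_symmetric hgt hgt' u u'
  have hsymD : dotProduct u'.2 (DK u) = dotProduct u.2 (DK u') := by
    simpa only [ContinuousLinearMap.coe_comp', Function.comp_apply, xiC_apply] using hsymKey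
  -- final assembly
  rw [hpair, hω, hω]
  show dotProduct (DP u) (DQ u') - dotProduct (DQ u) (DP u')
      = A * (dotProduct u.1 u'.2 - dotProduct u.2 u'.1)
  rw [hY u, hY u']
  have e1 := congrArg (fun t => dotProduct t u'.2) (hX u)
  have e2 := congrArg (fun t => dotProduct u.2 t) (hX u')
  simp only [add_dotProduct, dotProduct_add, sub_dotProduct,
    dotProduct_sub, smul_dotProduct, dotProduct_smul,
    smul_eq_mul] at e1 e2 ⊢
  have f1 : dotProduct (DP u) (M *ᵥ DP u')
      = dotProduct (M *ᵥ DP u) (DP u') := symm_dot₁ M hM (DP u) (DP u')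
  have f2 : dotProduct (DP u) (M *ᵥ (H₀ *ᵥ u'.2))
      = dotProduct ((H₀ * M) *ᵥ DP u) u'.2 :=
    symm_dot₂ M H₀ hM (hessSymm z₀.2) _ _
  have f3 : dotProduct (M *ᵥ (H₀ *ᵥ u.2)) (DP u')
      = dotProduct u.2 ((H₀ * M) *ᵥ DP u') := by
    rw [dotProduct_comm, symm_dot₂ M H₀ hM (hessSymm z₀.2), dotProduct_comm]
  have f4 : dotProduct (H₀ *ᵥ u.2) u'.2
      = dotProduct u.2 (H₀ *ᵥ u'.2) :=
    (symm_dot₁ H₀ (hessSymm z₀.2) u.2 u'.2).symm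
  have f5 : dotProduct (DK u) u'.2 = dotProduct u.2 (DK u') := by
    rw [dotProduct_comm]; exact hsymD
  linear_combination e1 - e2 + b * f1 + (h^2/2) * f2 - (h^2/2) * f3 - (h^2/2) * f5 - c₁ * f4
end

section
/- For the scheme (p,q) ↦ (P₁,Q₁) defined by P₁ = e^{-vh} p - (h²/2)∇²F(q)M P₁ - h(1+vh/2)e^{-vh}∇F(q) - (1+vh/2)e^{-vh}σw and Q₁ = q + h(1-vh/2)e^{vh}M P₁ + (h²/2)M∇F(q) + (h/2)Mσw, the determinant of the Jacobian matrix of the map (p,q) ↦ (P₁,Q₁) equals e^{-vhd}, where d is the dimension. -/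
open Real

namespace SchemeJac

noncomputable def clmOfMatrix {d : ℕ} (N : Matrix (Fin d) (Fin d) ℝ) :
    (Fin d → ℝ) →L[ℝ] (Fin d → ℝ) :=
  LinearMap.toContinuousLinearMap N.mulVecLin

@[simp] lemma clmOfMatrix_apply {d : ℕ} (N : Matrix (Fin d) (Fin d) ℝ) (v : Fin d → ℝ) :
    clmOfMatrix N v = N.mulVec v := rfl

noncomputable def gradClm (d : ℕ) : ((Fin d → ℝ) →L[ℝ] ℝ) →L[ℝ] (Fin d → ℝ) :=
  ContinuousLinearMap.pi (fun i => ContinuousLinearMap.apply ℝ ℝ (Pi.single i 1))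

@[simp] lemma gradClm_apply {d : ℕ} (L : (Fin d → ℝ) →L[ℝ] ℝ) (i : Fin d) :
    gradClm d L i = L (Pi.single i 1) := rfl

lemma mulentry {d : ℕ} (N X : Matrix (Fin d) (Fin d) ℝ) (i j : Fin d) :
    (N * X) i j = (N.mulVec fun k => X k j) i := rfl

end SchemeJac

open SchemeJac

set_option maxHeartbeats 1000000 in
/-- The Jacobian determinant of the one-step map `(p,q) ↦ (P₁,Q₁)` of scheme
(3.8.11) (with fixed noise increment `w`) equals `e^{-vhd}`. -/
theorem scheme_jacobian_determinant
    {d m : ℕ} (F : (Fin d → ℝ) → ℝ) (hF : ContDiff ℝ 2 F)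
    (M : Matrix (Fin d) (Fin d) ℝ) (hM : M.PosDef) (hMs : M.IsSymm)
    (σ : Matrix (Fin d) (Fin m) ℝ) (w : Fin m → ℝ)
    (v h : ℝ) (hv : 0 < v) (hh : 0 < h)
    (gradF : (Fin d → ℝ) → (Fin d → ℝ))
    (hgrad : ∀ q i, gradF q i = fderiv ℝ F q (Pi.single i 1))
    (hess : (Fin d → ℝ) → Matrix (Fin d) (Fin d) ℝ)
    (hhess : ∀ q i j, hess q i j
      = fderiv ℝ (fun x => fderiv ℝ F x (Pi.single j 1)) q (Pi.single i 1))
    (hinv : ∀ q, IsUnit ((1 : Matrix (Fin d) (Fin d) ℝ) + (h ^ 2 / 2) • (hess q * M)))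
    (P₁ Q₁ : (Fin d → ℝ) × (Fin d → ℝ) → (Fin d → ℝ))
    (hP : ∀ z, P₁ z = Real.exp (-(v * h)) • z.1
      - (h ^ 2 / 2) • (hess z.2).mulVec (M.mulVec (P₁ z))
      - (h * (1 + v * h / 2) * Real.exp (-(v * h))) • gradF z.2
      - ((1 + v * h / 2) * Real.exp (-(v * h))) • σ.mulVec w)
    (hQ : ∀ z, Q₁ z = z.2
      + (h * (1 - v * h / 2) * Real.exp (v * h)) • M.mulVec (P₁ z)
      + (h ^ 2 / 2) • M.mulVec (gradF z.2)
      + (h / 2) • M.mulVec (σ.mulVec w))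
    (hdiff : Differentiable ℝ (fun z => (P₁ z, Q₁ z))) :
    ∀ z : (Fin d → ℝ) × (Fin d → ℝ),
      Matrix.det (Matrix.of fun (i j : Fin d ⊕ Fin d) =>
        Sum.elim
          (fun i' => (fderiv ℝ (fun z' => (P₁ z', Q₁ z')) z
            (Sum.elim
              (fun j' => ((Pi.single j' 1, 0) : (Fin d → ℝ) × (Fin d → ℝ)))
              (fun j' => ((0, Pi.single j' 1) : (Fin d → ℝ) × (Fin d → ℝ))) j)).1 i')
          (fun i' => (fderiv ℝ (fun z' => (P₁ z', Q₁ z')) z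
            (Sum.elim
              (fun j' => ((Pi.single j' 1, 0) : (Fin d → ℝ) × (Fin d → ℝ)))
              (fun j' => ((0, Pi.single j' 1) : (Fin d → ℝ) × (Fin d → ℝ))) j)).2 i') i)
        = Real.exp (-(v * h * (d : ℝ))) := by
  intro z
  set e : ℝ := Real.exp (-(v * h)) with he
  have he0 : e ≠ 0 := Real.exp_ne_zero _
  set c : ℝ := h * (1 - v * h / 2) * Real.exp (v * h) with hc
  set c₁ : ℝ := h * (1 + v * h / 2) * e with hc₁
  set c₂ : ℝ := (1 + v * h / 2) * e with hc₂
  -- differentiability of the pieces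
  have hPdiff : Differentiable ℝ P₁ := fun x => (hdiff x).fst
  have hQdiff : Differentiable ℝ Q₁ := fun x => (hdiff x).snd
  set DP := fderiv ℝ P₁ z with hDP
  set DQ := fderiv ℝ Q₁ z with hDQ
  -- fderiv of the pair map
  have hfD : fderiv ℝ (fun z' => (P₁ z', Q₁ z')) z = DP.prod DQ :=
    ((hPdiff z).hasFDerivAt.prodMk (hQdiff z).hasFDerivAt).fderiv
  -- gradient facts
  have hf' : ContDiff ℝ 1 (fderiv ℝ F) := hF.fderiv_right (le_refl 2)
  have hgradF_eq : gradF = fun q => gradClm d (fderiv ℝ F q) := by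
    funext q; ext i; simp [hgrad]
  have hgrad_diff : Differentiable ℝ gradF := by
    rw [hgradF_eq]
    exact (gradClm d).differentiable.comp (hf'.differentiable one_ne_zero)
  set q := z.2 with hq
  have hgradD : ∀ u, fderiv ℝ gradF q u = fun j =>
      fderiv ℝ (fderiv ℝ F) q u (Pi.single j 1) := by
    intro u
    have : fderiv ℝ gradF q = (gradClm d).comp (fderiv ℝ (fderiv ℝ F) q) := by
      rw [hgradF_eq]
      exact ((gradClm d).hasFDerivAt.comp q
        ((hf'.differentiable one_ne_zero) q).hasFDerivAt).fderiv
    rw [this]; rfl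
  have hessEq : ∀ i j, hess q i j
      = fderiv ℝ (fderiv ℝ F) q (Pi.single i 1) (Pi.single j 1) := by
    intro i j
    rw [hhess]
    have hcomp := (ContinuousLinearMap.apply ℝ ℝ (Pi.single j 1)).hasFDerivAt.comp q
        ((hf'.differentiable one_ne_zero) q).hasFDerivAt
    rw [show (fun x => fderiv ℝ F x (Pi.single j 1))
        = (⇑(ContinuousLinearMap.apply ℝ ℝ (Pi.single j 1)) ∘ fderiv ℝ F) from rfl,
      hcomp.fderiv]
    rfl
  have hsymm : ∀ a b, fderiv ℝ (fderiv ℝ F) q a b = fderiv ℝ (fderiv ℝ F) q b a :=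
    hF.contDiffAt.isSymmSndFDerivAt (by norm_num)
  -- derivative of gradF is mulVec by hess q
  have hgradD' : ∀ u, fderiv ℝ gradF q u = (hess q).mulVec u := by
    intro u
    rw [hgradD]
    funext j
    have expand : fderiv ℝ (fderiv ℝ F) q u (Pi.single j 1)
        = fderiv ℝ (fderiv ℝ F) q (Pi.single j 1) u := hsymm _ _
    rw [expand]
    have hu : u = ∑ i, u i • (Pi.single i 1 : Fin d → ℝ) := by
      ext k; simp [Pi.single_apply]
    conv_lhs => rw [hu]
    rw [map_sum]
    simp only [map_smul, smul_eq_mul]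
    rw [Matrix.mulVec]
    simp only [dotProduct]
    congr 1
    funext i
    rw [hessEq j i]
    ring
  -- the auxiliary function g
  set g : (Fin d → ℝ) × (Fin d → ℝ) → (Fin d → ℝ) :=
    fun z' => e • z'.1 - P₁ z' - c₁ • gradF z'.2 - c₂ • σ.mulVec w with hgdef
  have hg_eq : ∀ z', g z' = (h ^ 2 / 2) • (hess z'.2).mulVec (M.mulVec (P₁ z')) := by
    intro z'
    have h' := hP z'
    show e • z'.1 - P₁ z' - c₁ • gradF z'.2 - c₂ • σ.mulVec w = _
    funext k
    have h2 := congrFun h' k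
    simp only [Pi.sub_apply, Pi.smul_apply, smul_eq_mul] at h2 ⊢
    linarith
  -- derivative of gradF ∘ snd
  have t3 : HasFDerivAt (fun z' : (Fin d → ℝ) × (Fin d → ℝ) => gradF z'.2)
      ((fderiv ℝ gradF q).comp (ContinuousLinearMap.snd ℝ _ _)) z :=
    (hgrad_diff q).hasFDerivAt.comp z hasFDerivAt_snd
  -- key derivative relation for DP in the p-direction
  have Eq1 : ∀ u, DP (u, 0) + (h ^ 2 / 2) • (hess q).mulVec (M.mulVec (DP (u, 0)))
      = e • u := by
    have hgD : HasFDerivAt g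
        (e • ContinuousLinearMap.fst ℝ (Fin d → ℝ) (Fin d → ℝ) - DP
          - c₁ • ((fderiv ℝ gradF q).comp (ContinuousLinearMap.snd ℝ _ _))) z := by
      exact ((((hasFDerivAt_fst.const_smul e).sub (hPdiff z).hasFDerivAt).sub
        (t3.const_smul c₁)).sub_const _ : HasFDerivAt
          (fun z' => e • z'.1 - P₁ z' - c₁ • gradF z'.2 - c₂ • σ.mulVec w) _ z)
    have hι : HasFDerivAt (fun p' : Fin d → ℝ => (p', q))
        (ContinuousLinearMap.inl ℝ (Fin d → ℝ) (Fin d → ℝ)) z.1 :=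
      hasFDerivAt_prodMk_left _ _
    have chain1 : HasFDerivAt (fun p' => g (p', q))
        ((e • ContinuousLinearMap.fst ℝ (Fin d → ℝ) (Fin d → ℝ) - DP
          - c₁ • ((fderiv ℝ gradF q).comp (ContinuousLinearMap.snd ℝ _ _))).comp
          (ContinuousLinearMap.inl ℝ (Fin d → ℝ) (Fin d → ℝ))) z.1 :=
      by have := hgD.comp z.1 hι; exact this
    have hP2 : HasFDerivAt (fun p' => P₁ (p', q))
        (DP.comp (ContinuousLinearMap.inl ℝ (Fin d → ℝ) (Fin d → ℝ))) z.1 :=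
      (hPdiff z).hasFDerivAt.comp z.1 hι
    have chain2eq : (fun p' => g (p', q))
        = fun p' => (h ^ 2 / 2) • clmOfMatrix (hess q)
            (clmOfMatrix M (P₁ (p', q))) := by
      funext p'; rw [hg_eq (p', q)]; rfl
    have chain2 : HasFDerivAt (fun p' => g (p', q))
        ((h ^ 2 / 2) • ((clmOfMatrix (hess q)).comp ((clmOfMatrix M).comp
          (DP.comp (ContinuousLinearMap.inl ℝ (Fin d → ℝ) (Fin d → ℝ)))))) z.1 := by
      rw [chain2eq]
      exact ((clmOfMatrix (hess q)).hasFDerivAt.comp z.1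
        ((clmOfMatrix M).hasFDerivAt.comp z.1 hP2)).const_smul (h ^ 2 / 2)
    have uniq := chain1.unique chain2
    intro u
    have := congrArg (fun (L : (Fin d → ℝ) →L[ℝ] (Fin d → ℝ)) => L u) uniq
    simp only [ContinuousLinearMap.comp_apply, ContinuousLinearMap.inl_apply,
      ContinuousLinearMap.sub_apply, ContinuousLinearMap.smul_apply,
      ContinuousLinearMap.coe_fst', ContinuousLinearMap.coe_snd', map_zero,
      clmOfMatrix_apply, smul_zero, sub_zero] at this
    rw [← this]
    abel
  -- derivative of Q₁
  have EqQ : ∀ u' : (Fin d → ℝ) × (Fin d → ℝ), DQ u' = u'.2 + c • M.mulVec (DP u')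
      + (h ^ 2 / 2) • M.mulVec (fderiv ℝ gradF q u'.2) := by
    have hQfun : Q₁ = fun z' => z'.2 + c • M.mulVec (P₁ z')
        + (h ^ 2 / 2) • M.mulVec (gradF z'.2) + (h / 2) • M.mulVec (σ.mulVec w) :=
      funext hQ
    have hQD : HasFDerivAt Q₁
        (ContinuousLinearMap.snd ℝ (Fin d → ℝ) (Fin d → ℝ)
          + c • ((clmOfMatrix M).comp DP)
          + (h ^ 2 / 2) • ((clmOfMatrix M).comp
              ((fderiv ℝ gradF q).comp (ContinuousLinearMap.snd ℝ _ _)))) z := by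
      rw [hQfun]
      exact ((hasFDerivAt_snd.add
        (((clmOfMatrix M).hasFDerivAt.comp z (hPdiff z).hasFDerivAt).const_smul c)).add
        (((clmOfMatrix M).hasFDerivAt.comp z t3).const_smul (h ^ 2 / 2))).add_const _
    intro u'
    rw [hDQ, hQD.fderiv]
    simp only [ContinuousLinearMap.add_apply, ContinuousLinearMap.smul_apply,
      ContinuousLinearMap.comp_apply, ContinuousLinearMap.coe_snd', clmOfMatrix_apply]
  -- matrix blocks
  set A : Matrix (Fin d) (Fin d) ℝ := Matrix.of fun i j => DP (Pi.single j 1, 0) i with hA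
  set B : Matrix (Fin d) (Fin d) ℝ := Matrix.of fun i j => DP (0, Pi.single j 1) i with hB
  set C : Matrix (Fin d) (Fin d) ℝ := Matrix.of fun i j => DQ (Pi.single j 1, 0) i with hC
  set E : Matrix (Fin d) (Fin d) ℝ := Matrix.of fun i j => DQ (0, Pi.single j 1) i with hE
  set H : Matrix (Fin d) (Fin d) ℝ := hess q with hH
  set K : Matrix (Fin d) (Fin d) ℝ := 1 + (h ^ 2 / 2) • (H * M) with hK
  have hJ : (Matrix.of fun (i j : Fin d ⊕ Fin d) =>
        Sum.elim
          (fun i' => (fderiv ℝ (fun z' => (P₁ z', Q₁ z')) z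
            (Sum.elim
              (fun j' => ((Pi.single j' 1, 0) : (Fin d → ℝ) × (Fin d → ℝ)))
              (fun j' => ((0, Pi.single j' 1) : (Fin d → ℝ) × (Fin d → ℝ))) j)).1 i')
          (fun i' => (fderiv ℝ (fun z' => (P₁ z', Q₁ z')) z
            (Sum.elim
              (fun j' => ((Pi.single j' 1, 0) : (Fin d → ℝ) × (Fin d → ℝ)))
              (fun j' => ((0, Pi.single j' 1) : (Fin d → ℝ) × (Fin d → ℝ))) j)).2 i') i)
      = Matrix.fromBlocks A B C E := by
    funext i j
    cases i <;> cases j <;> simp [hfD, Matrix.fromBlocks, hA, hB, hC, hE]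
  rw [hJ]
  -- matrix equations
  have hKA : K * A = e • (1 : Matrix (Fin d) (Fin d) ℝ) := by
    ext i j
    have h1 := congrFun (Eq1 (Pi.single j 1)) i
    simp only [Pi.add_apply, Pi.smul_apply, smul_eq_mul] at h1
    rw [hK, Matrix.add_mul, Matrix.one_mul, Matrix.add_apply, Matrix.smul_mul,
      Matrix.smul_apply, mulentry, ← Matrix.mulVec_mulVec]
    have hcol : (fun k => A k j) = DP (Pi.single j 1, 0) := rfl
    rw [hcol]
    show DP (Pi.single j 1, 0) i + (h ^ 2 / 2) * (H.mulVec (M.mulVec (DP (Pi.single j 1, 0)))) i = _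
    rw [h1]
    simp [Matrix.smul_apply, Matrix.one_apply, Pi.single_apply, eq_comm]
  have hCA : C = c • (M * A) := by
    ext i j
    have h1 := congrFun (EqQ (Pi.single j 1, 0)) i
    simp only [Pi.add_apply, Pi.smul_apply, smul_eq_mul, map_zero, Pi.zero_apply,
      smul_zero, add_zero, zero_add, mul_zero] at h1
    rw [Matrix.smul_apply, mulentry]
    have hcol : (fun k => A k j) = DP (Pi.single j 1, 0) := rfl
    rw [hcol]
    show DQ (Pi.single j 1, 0) i = _
    rw [h1]
    simp [smul_eq_mul]
  have hEE : E = 1 + c • (M * B) + (h ^ 2 / 2) • (M * H) := by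
    ext i j
    have h1 := congrFun (EqQ (0, Pi.single j 1)) i
    rw [hgradD'] at h1
    simp only [Pi.add_apply, Pi.smul_apply, smul_eq_mul] at h1
    rw [Matrix.add_apply, Matrix.add_apply, Matrix.smul_apply, Matrix.smul_apply,
      mulentry, mulentry]
    have hcolB : (fun k => B k j) = DP (0, Pi.single j 1) := rfl
    have hcolH : (fun k => H k j) = H.mulVec (Pi.single j 1) := by
      funext k; simp [Matrix.mulVec_single]
    rw [hcolB, hcolH]
    show DQ (0, Pi.single j 1) i = _
    rw [h1]
    simp only [smul_eq_mul, Matrix.one_apply, Pi.single_apply]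
  -- invertibility facts
  have hKunit : IsUnit K := hinv q
  have hKdet : K.det ≠ 0 := ((Matrix.isUnit_iff_isUnit_det K).mp hKunit).ne_zero
  have hdetKA : K.det * A.det = e ^ d := by
    have := congrArg Matrix.det hKA
    rwa [Matrix.det_mul, Matrix.det_smul, Matrix.det_one, mul_one, Fintype.card_fin] at this
  have hAdet : A.det ≠ 0 := by
    intro h0
    rw [h0, mul_zero] at hdetKA
    exact (pow_ne_zero d he0) hdetKA.symm
  haveI : Invertible A := A.invertibleOfIsUnitDet (Ne.isUnit hAdet)
  rw [Matrix.det_fromBlocks₁₁]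
  have hinvA : (⅟ A : Matrix (Fin d) (Fin d) ℝ) = A⁻¹ := Matrix.invOf_eq_nonsing_inv A
  have hSchur : E - C * ⅟ A * B = 1 + (h ^ 2 / 2) • (M * H) := by
    rw [hinvA, hCA, hEE]
    have : c • (M * A) * A⁻¹ * B = c • (M * B) := by
      rw [Matrix.smul_mul, Matrix.smul_mul, Matrix.mul_assoc M A A⁻¹,
        Matrix.mul_nonsing_inv A (Ne.isUnit hAdet), Matrix.mul_one]
    rw [this]
    abel
  rw [hSchur]
  have hdet2 : (1 + (h ^ 2 / 2) • (M * H)).det = K.det := by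
    have h1 : (h ^ 2 / 2) • (M * H) = M * ((h ^ 2 / 2) • H) := by
      rw [Matrix.mul_smul]
    have h2 : (h ^ 2 / 2) • (H * M) = ((h ^ 2 / 2) • H) * M := by
      rw [Matrix.smul_mul]
    rw [hK, h1, h2, Matrix.det_one_add_mul_comm]
  rw [hdet2]
  have hdetA : A.det = e ^ d / K.det := by
    field_simp [← hdetKA, mul_comm]
    linear_combination hdetKA
  rw [hdetA]
  field_simp
  rw [he, ← Real.exp_nat_mul]
  ring_nf
end

section
/- With H₀, H_r as above and G_{(j₁,j₂)} as above, the third-order coefficients G_{(j₁,j₂,j₃)} := Σ_i (∂H_{j₃}/∂y_i)(∂G_{(j₁,j₂)}/∂X_i) + (1/2) Σ_{i,j} (∂²H_{j₃}/∂y_i∂y_j)[(∂H_{j₁}/∂X_i)(∂H_{j₂}/∂X_j) + (∂H_{j₂}/∂X_i)(∂H_{j₁}/∂X_j)] satisfy G_{(r₁,r₂,r₃)} = G_{(r₁,r₂,0)} = G_{(r₁,0,r₂)} = 0 and G_{(0,r₁,r₂)}(X,y) = e^{v y_{d+1}} σ_{r₁}ᵀ M σ_{r₂}, for all r₁, r₂,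 r₃ ∈ {1,…,m}. -/
open Real

noncomputable section

/-- The autonomous Hamiltonian `H₀` of the transformed Langevin system. -/
def langevinH0 {d : ℕ} (F : (Fin d → ℝ) → ℝ) (M : Matrix (Fin d) (Fin d) ℝ)
    (v : ℝ) (X Y : Fin (d + 1) → ℝ) : ℝ :=
  Real.exp (v * Y (Fin.last d)) * F (fun i => Y i.castSucc)
    + (1 / 2) * Real.exp (-(v * Y (Fin.last d)))
        * ∑ i : Fin d, ∑ j : Fin d, X i.castSucc * M i j * X j.castSucc
    + X (Fin.last d)

/-- The noise Hamiltonians `H_r` of the transformed Langevin system. -/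
def langevinHr {d m : ℕ} (σ : Fin m → Fin d → ℝ) (v : ℝ) (r : Fin m)
    (_X Y : Fin (d + 1) → ℝ) : ℝ :=
  Real.exp (v * Y (Fin.last d)) * ∑ i : Fin d, σ r i * Y i.castSucc

/-- Partial derivative `∂H/∂y_i` (second argument). -/
def pdY {n : ℕ} (H : (Fin n → ℝ) → (Fin n → ℝ) → ℝ)
    (X y : Fin n → ℝ) (i : Fin n) : ℝ :=
  fderiv ℝ (H X) y (Pi.single i 1)

/-- Partial derivative `∂H/∂X_i` (first argument). -/
def pdX {n : ℕ} (H : (Fin n → ℝ) → (Fin n → ℝ) → ℝ)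
    (X y : Fin n → ℝ) (i : Fin n) : ℝ :=
  fderiv ℝ (fun X' => H X' y) X (Pi.single i 1)

/-- Second partial derivative `∂²H/∂y_i∂y_j` (second argument). -/
def pdY2 {n : ℕ} (H : (Fin n → ℝ) → (Fin n → ℝ) → ℝ)
    (X y : Fin n → ℝ) (i j : Fin n) : ℝ :=
  fderiv ℝ (fun y' => fderiv ℝ (H X) y' (Pi.single j 1)) y (Pi.single i 1)

/-- Second-order generating-function coefficient
`G_{(j₁,j₂)} = Σᵢ (∂H_{j₂}/∂y_i)(∂H_{j₁}/∂X_i)`. -/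
def Gcoef2 {n : ℕ} (H₁ H₂ : (Fin n → ℝ) → (Fin n → ℝ) → ℝ)
    (X y : Fin n → ℝ) : ℝ :=
  ∑ i : Fin n, pdY H₂ X y i * pdX H₁ X y i

/-- Third-order generating-function coefficient
`G_{(j₁,j₂,j₃)} = Σᵢ (∂H_{j₃}/∂y_i)(∂G_{(j₁,j₂)}/∂X_i)
 + ½ Σᵢⱼ (∂²H_{j₃}/∂y_i∂y_j)[(∂H_{j₁}/∂X_i)(∂H_{j₂}/∂X_j)
    + (∂H_{j₂}/∂X_i)(∂H_{j₁}/∂X_j)]`. -/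
def Gcoef3 {n : ℕ} (H₁ H₂ H₃ : (Fin n → ℝ) → (Fin n → ℝ) → ℝ)
    (X y : Fin n → ℝ) : ℝ :=
  (∑ i : Fin n, pdY H₃ X y i
      * fderiv ℝ (fun X' => Gcoef2 H₁ H₂ X' y) X (Pi.single i 1))
    + (1 / 2) * ∑ i : Fin n, ∑ j : Fin n, pdY2 H₃ X y i j
        * (pdX H₁ X y i * pdX H₂ X y j + pdX H₂ X y i * pdX H₁ X y j)

section Aux

variable {d m : ℕ} (F : (Fin d → ℝ) → ℝ) (M : Matrix (Fin d) (Fin d) ℝ)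
  (v : ℝ) (σ : Fin m → Fin d → ℝ) (r : Fin m) (X y : Fin (d + 1) → ℝ)

lemma pdX_Hr (k : Fin (d + 1)) : pdX (langevinHr σ v r) X y k = 0 := by
  simp [pdX, langevinHr]

lemma Gcoef2_Hr_left (H₂ : (Fin (d + 1) → ℝ) → (Fin (d + 1) → ℝ) → ℝ) :
    Gcoef2 (langevinHr σ v r) H₂ X y = 0 := by
  simp [Gcoef2, pdX_Hr]

lemma hasFDerivAt_Hr :
    HasFDerivAt (langevinHr σ v r X)
      (Real.exp (v * y (Fin.last d)) •
          (∑ i : Fin d, σ r i • (ContinuousLinearMap.proj i.castSucc :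
              (Fin (d+1) → ℝ) →L[ℝ] ℝ))
        + (∑ i : Fin d, σ r i * y i.castSucc) •
            (Real.exp (v * y (Fin.last d)) • (v • (ContinuousLinearMap.proj (Fin.last d) :
              (Fin (d+1) → ℝ) →L[ℝ] ℝ)))) y := by
  have h1 : HasFDerivAt (fun Y : Fin (d+1) → ℝ => Real.exp (v * Y (Fin.last d)))
      (Real.exp (v * y (Fin.last d)) • (v • (ContinuousLinearMap.proj (Fin.last d) :
        (Fin (d+1) → ℝ) →L[ℝ] ℝ))) y :=
    (((ContinuousLinearMap.proj (Fin.last d) : (Fin (d+1) → ℝ) →L[ℝ] ℝ).hasFDerivAt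
      (x := y)).const_mul v).exp
  have h2 : HasFDerivAt (fun Y : Fin (d+1) → ℝ => ∑ i : Fin d, σ r i * Y i.castSucc)
      (∑ i : Fin d, σ r i • (ContinuousLinearMap.proj i.castSucc :
        (Fin (d+1) → ℝ) →L[ℝ] ℝ)) y :=
    HasFDerivAt.fun_sum fun i _ =>
      ((ContinuousLinearMap.proj i.castSucc : (Fin (d+1) → ℝ) →L[ℝ] ℝ).hasFDerivAt
        (x := y)).const_mul (σ r i)
  exact h1.mul h2

lemma pdY_Hr_castSucc (k : Fin d) :
    pdY (langevinHr σ v r) X y k.castSucc = Real.exp (v * y (Fin.last d)) * σ r k := by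
  rw [pdY, (hasFDerivAt_Hr v σ r X y).fderiv]
  simp [Pi.single_apply, Fin.castSucc_inj, (Fin.castSucc_lt_last k).ne]

lemma pdY_Hr_last :
    pdY (langevinHr σ v r) X y (Fin.last d)
      = (∑ i : Fin d, σ r i * y i.castSucc) * (Real.exp (v * y (Fin.last d)) * v) := by
  rw [pdY, (hasFDerivAt_Hr v σ r X y).fderiv]
  simp [Pi.single_apply, (Fin.castSucc_lt_last _).ne]

lemma hasFDerivAt_H0_X :
    HasFDerivAt (fun X' => langevinH0 F M v X' y)
      (((0 : (Fin (d+1) → ℝ) →L[ℝ] ℝ)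
          + ((1:ℝ) / 2 * Real.exp (-(v * y (Fin.last d)))) •
            (∑ i : Fin d, ∑ j : Fin d,
              ((X i.castSucc * M i j) • (ContinuousLinearMap.proj j.castSucc :
                  (Fin (d+1) → ℝ) →L[ℝ] ℝ)
                + X j.castSucc • ((M i j) • (ContinuousLinearMap.proj i.castSucc :
                  (Fin (d+1) → ℝ) →L[ℝ] ℝ)))))
        + (ContinuousLinearMap.proj (Fin.last d) : (Fin (d+1) → ℝ) →L[ℝ] ℝ)) X := by
  have hQ : HasFDerivAt
      (fun X' : Fin (d+1) → ℝ =>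
        ∑ i : Fin d, ∑ j : Fin d, X' i.castSucc * M i j * X' j.castSucc)
      (∑ i : Fin d, ∑ j : Fin d,
        ((X i.castSucc * M i j) • (ContinuousLinearMap.proj j.castSucc :
            (Fin (d+1) → ℝ) →L[ℝ] ℝ)
          + X j.castSucc • ((M i j) • (ContinuousLinearMap.proj i.castSucc :
            (Fin (d+1) → ℝ) →L[ℝ] ℝ)))) X :=
    HasFDerivAt.fun_sum fun i _ => HasFDerivAt.fun_sum fun j _ =>
      (((ContinuousLinearMap.proj i.castSucc : (Fin (d+1) → ℝ) →L[ℝ] ℝ).hasFDerivAt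
          (x := X)).mul_const (M i j)).mul
        ((ContinuousLinearMap.proj j.castSucc : (Fin (d+1) → ℝ) →L[ℝ] ℝ).hasFDerivAt (x := X))
  exact ((hasFDerivAt_const _ _).add (hQ.const_mul _)).add
    ((ContinuousLinearMap.proj (Fin.last d) : (Fin (d+1) → ℝ) →L[ℝ] ℝ).hasFDerivAt (x := X))

lemma pdX_H0_last : pdX (langevinH0 F M v) X y (Fin.last d) = 1 := by
  rw [pdX, (hasFDerivAt_H0_X F M v X y).fderiv]
  simp [Pi.single_apply, (Fin.castSucc_lt_last _).ne]

lemma pdX_H0_castSucc (k : Fin d) :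
    pdX (langevinH0 F M v) X y k.castSucc
      = (1 / 2) * Real.exp (-(v * y (Fin.last d)))
          * ((∑ i : Fin d, X i.castSucc * M i k) + ∑ j : Fin d, X j.castSucc * M k j) := by
  rw [pdX, (hasFDerivAt_H0_X F M v X y).fderiv]
  simp only [ContinuousLinearMap.add_apply, ContinuousLinearMap.zero_apply,
    ContinuousLinearMap.smul_apply, ContinuousLinearMap.sum_apply, ContinuousLinearMap.proj_apply,
    Pi.single_apply, Fin.castSucc_inj, (Fin.castSucc_lt_last k).ne', smul_eq_mul]
  simp [mul_ite, Finset.sum_add_distrib, Finset.sum_ite_eq', Finset.sum_ite_irrel,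
    Finset.sum_ite_eq, Finset.mul_sum]

/-- The coefficients of the affine (in `X`) function `X ↦ G_{(0,r)}(X,y)`. -/
def langW (i : Fin d) : ℝ :=
  ∑ k : Fin d, Real.exp (v * y (Fin.last d)) * σ r k
    * ((1 / 2) * Real.exp (-(v * y (Fin.last d))) * (M i k + M k i))

lemma Gcoef2_H0_Hr_eq :
    (fun X' => Gcoef2 (langevinH0 F M v) (langevinHr σ v r) X' y)
      = fun X' : Fin (d+1) → ℝ => (∑ i : Fin d, langW M v σ r y i * X' i.castSucc)
          + (∑ i : Fin d, σ r i * y i.castSucc) * (Real.exp (v * y (Fin.last d)) * v) := by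
  funext X'
  rw [Gcoef2, Fin.sum_univ_castSucc]
  simp only [pdY_Hr_castSucc, pdY_Hr_last, pdX_H0_castSucc, pdX_H0_last, langW, mul_one]
  congr 1
  calc ∑ x : Fin d, Real.exp (v * y (Fin.last d)) * σ r x
        * (1 / 2 * Real.exp (-(v * y (Fin.last d)))
          * ((∑ i : Fin d, X' i.castSucc * M i x) + ∑ j : Fin d, X' j.castSucc * M x j))
      = ∑ x : Fin d, ∑ i : Fin d, Real.exp (v * y (Fin.last d)) * σ r x
          * (1 / 2 * Real.exp (-(v * y (Fin.last d)))
            * (X' i.castSucc * (M i x + M x i))) := by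
        refine Finset.sum_congr rfl fun x _ => ?_
        rw [← Finset.sum_add_distrib, Finset.mul_sum, Finset.mul_sum]
        exact Finset.sum_congr rfl fun i _ => by ring
    _ = ∑ i : Fin d, ∑ x : Fin d, Real.exp (v * y (Fin.last d)) * σ r x
          * (1 / 2 * Real.exp (-(v * y (Fin.last d)))
            * (X' i.castSucc * (M i x + M x i))) := Finset.sum_comm
    _ = ∑ i : Fin d, (∑ k : Fin d, Real.exp (v * y (Fin.last d)) * σ r k
          * (1 / 2 * Real.exp (-(v * y (Fin.last d))) * (M i k + M k i))) * X' i.castSucc := by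
        refine Finset.sum_congr rfl fun i _ => ?_
        rw [Finset.sum_mul]
        exact Finset.sum_congr rfl fun k _ => by ring

lemma hasFDerivAt_G2 : HasFDerivAt
      (fun X' : Fin (d+1) → ℝ => (∑ i : Fin d, langW M v σ r y i * X' i.castSucc)
        + (∑ i : Fin d, σ r i * y i.castSucc) * (Real.exp (v * y (Fin.last d)) * v))
      (∑ i : Fin d, langW M v σ r y i • (ContinuousLinearMap.proj i.castSucc :
        (Fin (d+1) → ℝ) →L[ℝ] ℝ)) X :=
    (HasFDerivAt.fun_sum fun i _ =>
      ((ContinuousLinearMap.proj i.castSucc : (Fin (d+1) → ℝ) →L[ℝ] ℝ).hasFDerivAt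
        (x := X)).const_mul (langW M v σ r y i)).add_const _

lemma fderiv_Gcoef2_H0_Hr_castSucc (t : Fin d) :
    fderiv ℝ (fun X' => Gcoef2 (langevinH0 F M v) (langevinHr σ v r) X' y) X
        (Pi.single t.castSucc 1)
      = langW M v σ r y t := by
  rw [Gcoef2_H0_Hr_eq, (hasFDerivAt_G2 M v σ r X y).fderiv]
  simp [Pi.single_apply, Fin.castSucc_inj]

lemma fderiv_Gcoef2_H0_Hr_last :
    fderiv ℝ (fun X' => Gcoef2 (langevinH0 F M v) (langevinHr σ v r) X' y) X
        (Pi.single (Fin.last d) 1)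
      = 0 := by
  rw [Gcoef2_H0_Hr_eq, (hasFDerivAt_G2 M v σ r X y).fderiv]
  simp [Pi.single_apply, (Fin.castSucc_lt_last _).ne']

end Aux

/-- Computation of the third-order generating-function coefficients for the
transformed Langevin Hamiltonians: `G_{(r₁,r₂,r₃)} = G_{(r₁,r₂,0)} =
G_{(r₁,0,r₂)} = 0` and `G_{(0,r₁,r₂)} = e^{v y_{d+1}} σ_{r₁}ᵀ M σ_{r₂}`. -/
theorem langevin_Gcoef3_computation
    {d m : ℕ} (F : (Fin d → ℝ) → ℝ) (hF : ContDiff ℝ (⊤ : ℕ∞) F)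
    (M : Matrix (Fin d) (Fin d) ℝ) (hM : M.IsSymm)
    (v : ℝ) (hv : 0 < v) (σ : Fin m → Fin d → ℝ) :
    ∀ X y : Fin (d + 1) → ℝ,
      (∀ r₁ r₂ r₃ : Fin m,
        Gcoef3 (langevinHr σ v r₁) (langevinHr σ v r₂) (langevinHr σ v r₃) X y = 0) ∧
      (∀ r₁ r₂ : Fin m,
        Gcoef3 (langevinHr σ v r₁) (langevinHr σ v r₂) (langevinH0 F M v) X y = 0) ∧
      (∀ r₁ r₂ : Fin m,
        Gcoef3 (langevinHr σ v r₁) (langevinH0 F M v) (langevinHr σ v r₂) X y = 0) ∧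
      (∀ r₁ r₂ : Fin m,
        Gcoef3 (langevinH0 F M v) (langevinHr σ v r₁) (langevinHr σ v r₂) X y
          = Real.exp (v * y (Fin.last d))
              * ∑ i : Fin d, ∑ j : Fin d, σ r₁ i * M i j * σ r₂ j) := by
  intro X y
  have hz : ∀ (r : Fin m) (H₂ : (Fin (d+1) → ℝ) → (Fin (d+1) → ℝ) → ℝ),
      (fun X' => Gcoef2 (langevinHr σ v r) H₂ X' y) = fun _ => (0 : ℝ) := by
    intro r H₂; funext X'; exact Gcoef2_Hr_left v σ r X' y H₂
  refine ⟨?_, ?_, ?_, ?_⟩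
  · intro r₁ r₂ r₃; simp [Gcoef3, hz, pdX_Hr]
  · intro r₁ r₂; simp [Gcoef3, hz, pdX_Hr]
  · intro r₁ r₂; simp [Gcoef3, hz, pdX_Hr]
  · intro r₁ r₂
    rw [Gcoef3]
    have h2 : (1:ℝ) / 2 * ∑ i : Fin (d+1), ∑ j : Fin (d+1),
        pdY2 (langevinHr σ v r₂) X y i j
          * (pdX (langevinH0 F M v) X y i * pdX (langevinHr σ v r₁) X y j
            + pdX (langevinHr σ v r₁) X y i * pdX (langevinH0 F M v) X y j) = 0 := by
      simp [pdX_Hr]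
    rw [h2, add_zero, Fin.sum_univ_castSucc]
    simp only [fderiv_Gcoef2_H0_Hr_castSucc, fderiv_Gcoef2_H0_Hr_last, pdY_Hr_castSucc,
      mul_zero, add_zero, langW]
    have hE : Real.exp (v * y (Fin.last d)) * Real.exp (-(v * y (Fin.last d))) = 1 := by
      rw [← Real.exp_add]; simp
    calc ∑ x : Fin d, Real.exp (v * y (Fin.last d)) * σ r₂ x
          * (∑ k : Fin d, Real.exp (v * y (Fin.last d)) * σ r₁ k
            * (1 / 2 * Real.exp (-(v * y (Fin.last d))) * (M x k + M k x)))
        = ∑ x : Fin d, ∑ k : Fin d, Real.exp (v * y (Fin.last d))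
            * (σ r₁ k * M k x * σ r₂ x) := by
          refine Finset.sum_congr rfl fun x _ => ?_
          rw [Finset.mul_sum]
          refine Finset.sum_congr rfl fun k _ => ?_
          rw [hM.apply k x]
          linear_combination (Real.exp (v * y (Fin.last d)) * σ r₂ x * σ r₁ k * M k x) * hE
      _ = ∑ k : Fin d, ∑ x : Fin d, Real.exp (v * y (Fin.last d))
            * (σ r₁ k * M k x * σ r₂ x) := Finset.sum_comm
      _ = Real.exp (v * y (Fin.last d)) * ∑ i : Fin d, ∑ j : Fin d, σ r₁ i * M i j * σ r₂ j := by
          simp only [Finset.mul_sum]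
end
end

section
/- For the linear numerical scheme (5.5): P_{n+1} = e^{-vh}P_n - (h²a²/2)P_{n+1} - h(1+vh/2)e^{-vh}aQ_n - (1+vh/2)e^{-vh}σΔW, Q_{n+1} = Q_n + h(1-vh/2)e^{vh}aP_{n+1} + (h²a²/2)Q_n + (h/2)aσΔW, the one-step transition matrix T_h (Jacobian of (P_n,Q_n) ↦ (P_{n+1},Q_{n+1})) satisfies det(T_h) = e^{-vh}, for every a, v, σ ∈ ℝ with 1 + h²a²/2 ≠ 0. -/
open Real

lemma affine_fderiv_apply (A B C : ℝ) (z₀ w : ℝ × ℝ) :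
    fderiv ℝ (fun z : ℝ × ℝ => A * z.1 + B * z.2 + C) z₀ w
      = A * w.1 + B * w.2 := by
  have hd : HasFDerivAt (fun z : ℝ × ℝ => A * z.1 + B * z.2 + C)
      (A • ContinuousLinearMap.fst ℝ ℝ ℝ + B • ContinuousLinearMap.snd ℝ ℝ ℝ) z₀ := by
    have h1 : HasFDerivAt (fun z : ℝ × ℝ => z.1)
        (ContinuousLinearMap.fst ℝ ℝ ℝ) z₀ := hasFDerivAt_fst
    have h2 : HasFDerivAt (fun z : ℝ × ℝ => z.2)
        (ContinuousLinearMap.snd ℝ ℝ ℝ) z₀ := hasFDerivAt_snd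
    exact ((h1.const_mul A).add (h2.const_mul B)).add_const C
  rw [hd.fderiv]
  simp [ContinuousLinearMap.smul_apply]

/-- For the linear numerical scheme (5.5), written as a map
`(Pₙ,Qₙ) ↦ (Pₙ₊₁,Qₙ₊₁)` (with fixed noise increment `ΔW`), the one-step
transition matrix (the Jacobian of the map) has determinant `e^{-vh}`,
provided `1 + h²a²/2 ≠ 0`. -/
theorem linear_scheme_jacobian_det
    (a v σ h ΔW : ℝ) (hc : 1 + h ^ 2 * a ^ 2 / 2 ≠ 0)
    (Pmap Qmap : ℝ × ℝ → ℝ)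
    (hP : ∀ z : ℝ × ℝ, Pmap z =
      Real.exp (-(v * h)) * z.1 - h ^ 2 * a ^ 2 / 2 * Pmap z
        - h * (1 + v * h / 2) * Real.exp (-(v * h)) * a * z.2
        - (1 + v * h / 2) * Real.exp (-(v * h)) * σ * ΔW)
    (hQ : ∀ z : ℝ × ℝ, Qmap z =
      z.2 + h * (1 - v * h / 2) * Real.exp (v * h) * a * Pmap z
        + h ^ 2 * a ^ 2 / 2 * z.2 + h / 2 * a * σ * ΔW) :
    ∀ z₀ : ℝ × ℝ,
      Matrix.det !![fderiv ℝ Pmap z₀ (1, 0), fderiv ℝ Pmap z₀ (0, 1);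
                    fderiv ℝ Qmap z₀ (1, 0), fderiv ℝ Qmap z₀ (0, 1)]
        = Real.exp (-(v * h)) := by
  intro z₀
  set c : ℝ := 1 + h ^ 2 * a ^ 2 / 2 with hcdef
  set e : ℝ := Real.exp (-(v * h)) with hedef
  set A : ℝ := e / c with hA
  set B : ℝ := -(h * (1 + v * h / 2) * e * a) / c with hB
  set C : ℝ := -((1 + v * h / 2) * e * σ * ΔW) / c with hC
  set k : ℝ := h * (1 - v * h / 2) * Real.exp (v * h) * a with hk
  have hPe : Pmap = fun z : ℝ × ℝ => A * z.1 + B * z.2 + C := by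
    funext z
    have h0 := hP z
    have h1 : Pmap z * c = e * z.1 - h * (1 + v * h / 2) * e * a * z.2
        - (1 + v * h / 2) * e * σ * ΔW := by
      rw [hcdef]; linear_combination h0
    rw [hA, hB, hC]
    field_simp
    linear_combination 2 * h1
  have hQe : Qmap = fun z : ℝ × ℝ =>
      (k * A) * z.1 + (1 + h ^ 2 * a ^ 2 / 2 + k * B) * z.2 + (k * C + h / 2 * a * σ * ΔW) := by
    funext z
    have h0 := hQ z
    rw [hPe] at h0
    rw [h0]; ring
  rw [hPe, hQe]
  rw [Matrix.det_fin_two_of]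
  simp only [affine_fderiv_apply]
  have hm : 1 + h ^ 2 * a ^ 2 / 2 = c := rfl
  rw [hA, hB]
  field_simp
  ring
end
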